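/- arXiv:1003.2044 — 2 statements merged into one kernel-verified Lean document; each statement's English description precedes it below -/
import Mathlib

section
/- Let {x, x₁} be a Bertrand D-pair with constant λ ≠ 0, correspondence s and angle function θ. If one of the curves x, x₁ is a principal line (τ_g ≡ 0 or τ_{g₁} ≡ 0), then for every s₁ one has k_g(s(s₁)) − k_{g₁}(s₁) = λ k_g(s(s₁)) k_{g₁}(s₁). -/
noncomputable section

abbrev E3 := EuclideanSpace ℝ (Fin 3)

/-- Cross product on `EuclideanSpace ℝ (Fin 3)`. -/
def cross3 (a b : E3) : E3 :=
  WithLp.toLp 2 ![a 1 * b 2 - a 2 * b 1, a 2 * b 0 - a 0 * b 2, a 0 * b 1 - a 1 * b 0]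

/-- Darboux frame vector `g = n × T`, where `T = x'`. -/
def gvec (x n : ℝ → E3) : ℝ → E3 := fun t => cross3 (n t) (deriv x t)

/-- Geodesic curvature `k_g = ⟪T', g⟫`. -/
def geodCurv (x n : ℝ → E3) : ℝ → ℝ := fun t => (inner ℝ (deriv (deriv x) t) (gvec x n t) : ℝ)

/-- Normal curvature `k_n = ⟪T', n⟫`. -/
def normCurv (x n : ℝ → E3) : ℝ → ℝ := fun t => (inner ℝ (deriv (deriv x) t) (n t) : ℝ)

/-- Geodesic torsion `τ_g = ⟪g', n⟫`. -/
def geodTors (x n : ℝ → E3) : ℝ → ℝ := fun t => (inner ℝ (deriv (gvec x n) t) (n t) : ℝ)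

/-- A unit-speed smooth curve `x` on an oriented surface, encoded by a smooth unit
normal field `n` along `x` orthogonal to the tangent. -/
def IsDarbouxCurve (x n : ℝ → E3) : Prop :=
  ContDiff ℝ (⊤ : ℕ∞) x ∧ ContDiff ℝ (⊤ : ℕ∞) n ∧ (∀ t, ‖deriv x t‖ = 1) ∧ (∀ t, ‖n t‖ = 1) ∧
    ∀ t, (inner ℝ (n t) (deriv x t) : ℝ) = 0

/-- `{x, x₁}` is a Bertrand D-pair with constant `lam ≠ 0`, smooth increasing
correspondence `s` and smooth angle function `θ`. -/
def IsBertrandDPair (x n x₁ n₁ : ℝ → E3) (lam : ℝ) (s θ : ℝ → ℝ) : Prop :=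
  IsDarbouxCurve x n ∧ IsDarbouxCurve x₁ n₁ ∧ lam ≠ 0 ∧
    ContDiff ℝ (⊤ : ℕ∞) s ∧ (∀ t, 0 < deriv s t) ∧
    (∀ t, x (s t) = x₁ t + lam • gvec x₁ n₁ t) ∧
    (∀ t, gvec x n (s t) = gvec x₁ n₁ t) ∧
    ContDiff ℝ (⊤ : ℕ∞) θ ∧
    (∀ t, deriv x (s t) = Real.cos (θ t) • deriv x₁ t - Real.sin (θ t) • n₁ t) ∧
    (∀ t, n (s t) = Real.sin (θ t) • deriv x₁ t + Real.cos (θ t) • n₁ t)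

open RealInnerProductSpace in
lemma inner3 (u v : E3) : ⟪u, v⟫ = u 0 * v 0 + u 1 * v 1 + u 2 * v 2 := by
  simp [PiLp.inner_apply, Fin.sum_univ_three, RCLike.inner_apply, conj_trivial]; ring

lemma cross3_apply0 (a b : E3) : cross3 a b 0 = a 1 * b 2 - a 2 * b 1 := rfl
lemma cross3_apply1 (a b : E3) : cross3 a b 1 = a 2 * b 0 - a 0 * b 2 := rfl
lemma cross3_apply2 (a b : E3) : cross3 a b 2 = a 0 * b 1 - a 1 * b 0 := rfl

open RealInnerProductSpace in
lemma cross3_inner_right (a b : E3) : ⟪cross3 a b, b⟫ = 0 := by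
  rw [inner3, cross3_apply0, cross3_apply1, cross3_apply2]; ring

lemma contDiff_cross3 {f g : ℝ → E3} (hf : ContDiff ℝ (⊤ : ℕ∞) f)
    (hg : ContDiff ℝ (⊤ : ℕ∞) g) :
    ContDiff ℝ (⊤ : ℕ∞) (fun t => cross3 (f t) (g t)) := by
  rw [contDiff_euclidean]
  have hf' : ∀ i, ContDiff ℝ (⊤ : ℕ∞) fun t => f t i := contDiff_euclidean.mp hf
  have hg' : ∀ i, ContDiff ℝ (⊤ : ℕ∞) fun t => g t i := contDiff_euclidean.mp hg
  intro i
  fin_cases i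
  · exact ((hf' 1).mul (hg' 2)).sub ((hf' 2).mul (hg' 1))
  · exact ((hf' 2).mul (hg' 0)).sub ((hf' 0).mul (hg' 2))
  · exact ((hf' 0).mul (hg' 1)).sub ((hf' 1).mul (hg' 0))

open RealInnerProductSpace in
lemma darboux_main (x n : ℝ → E3) (h : IsDarbouxCurve x n) :
    Differentiable ℝ (gvec x n) ∧
    (∀ t, ⟪deriv (gvec x n) t, deriv x t⟫ = - geodCurv x n t) := by
  obtain ⟨hx, hn, -, -, -⟩ := h
  have hx' : ContDiff ℝ (⊤ : ℕ∞) x := hx.of_le (by simp)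
  have hn' : ContDiff ℝ (⊤ : ℕ∞) n := hn.of_le (by simp)
  have hT : ContDiff ℝ (⊤ : ℕ∞) (deriv x) := (contDiff_infty_iff_deriv.mp hx').2
  have hg : ContDiff ℝ (⊤ : ℕ∞) (gvec x n) := contDiff_cross3 hn' hT
  have hgd : Differentiable ℝ (gvec x n) := hg.differentiable (by simp)
  have hTd : Differentiable ℝ (deriv x) := hT.differentiable (by simp)
  refine ⟨hgd, fun t => ?_⟩
  have h1 := HasDerivAt.inner ℝ (hgd t).hasDerivAt (hTd t).hasDerivAt
  have h2 : (fun u => (⟪gvec x n u, deriv x u⟫ : ℝ)) = fun _ => (0 : ℝ) :=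
    funext fun u => cross3_inner_right _ _
  rw [h2] at h1
  have h3 := h1.unique (hasDerivAt_const t 0)
  have h4 : ⟪gvec x n t, deriv (deriv x) t⟫ = geodCurv x n t := by
    rw [real_inner_comm]; rfl
  linarith [h3, h4]

open RealInnerProductSpace in
theorem bertrand_D_stmt_7
    (x n x₁ n₁ : ℝ → E3) (lam : ℝ) (s θ : ℝ → ℝ)
    (hpair : IsBertrandDPair x n x₁ n₁ lam s θ)
    (hprin : (∀ t, geodTors x n t = 0) ∨ (∀ t, geodTors x₁ n₁ t = 0)) :
    ∀ t, geodCurv x n (s t) - geodCurv x₁ n₁ t = lam * (geodCurv x n (s t) * geodCurv x₁ n₁ t) := by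
  obtain ⟨hxD, hx1D, hlam, hs, hspos, hxeq, hgeq, hθ, hTeq, hneq⟩ := hpair
  obtain ⟨hgdiff, hginner⟩ := darboux_main x n hxD
  obtain ⟨hg1diff, hg1inner⟩ := darboux_main x₁ n₁ hx1D
  obtain ⟨hx, hn, hTn, hnn, hnT⟩ := hxD
  obtain ⟨hx1, hn1, hT1n, hn1n, hn1T⟩ := hx1D
  intro t
  have hxdiff : Differentiable ℝ x := hx.differentiable (by simp)
  have hx1diff : Differentiable ℝ x₁ := hx1.differentiable (by simp)
  have hsdiff : Differentiable ℝ s := hs.differentiable (by simp)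
  -- differentiate x ∘ s = x₁ + lam • g₁
  have h1 : HasDerivAt (fun u => x (s u)) (deriv s t • deriv x (s t)) t :=
    HasDerivAt.scomp t (hxdiff (s t)).hasDerivAt (hsdiff t).hasDerivAt
  have h2 : HasDerivAt (fun u => x₁ u + lam • gvec x₁ n₁ u)
      (deriv x₁ t + lam • deriv (gvec x₁ n₁) t) t :=
    (hx1diff t).hasDerivAt.add ((hg1diff t).hasDerivAt.const_smul lam)
  have hE1 : deriv s t • deriv x (s t) = deriv x₁ t + lam • deriv (gvec x₁ n₁) t := by
    have heq : (fun u => x (s u)) = fun u => x₁ u + lam • gvec x₁ n₁ u := funext hxeq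
    exact (heq ▸ h1).unique h2
  -- differentiate g ∘ s = g₁
  have h3 : HasDerivAt (fun u => gvec x n (s u)) (deriv s t • deriv (gvec x n) (s t)) t :=
    HasDerivAt.scomp t (hgdiff (s t)).hasDerivAt (hsdiff t).hasDerivAt
  have hE2 : deriv s t • deriv (gvec x n) (s t) = deriv (gvec x₁ n₁) t := by
    have heq : (fun u => gvec x n (s u)) = gvec x₁ n₁ := funext hgeq
    exact (heq ▸ h3).unique (hg1diff t).hasDerivAt
  -- scalar facts
  have e1 : ⟪deriv x₁ t, deriv x₁ t⟫ = 1 := by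
    rw [real_inner_self_eq_norm_sq, hT1n t]; norm_num
  have e2 : ⟪n₁ t, n₁ t⟫ = 1 := by
    rw [real_inner_self_eq_norm_sq, hn1n t]; norm_num
  have e3 : ⟪n₁ t, deriv x₁ t⟫ = 0 := hn1T t
  have e3' : ⟪deriv x₁ t, n₁ t⟫ = 0 := by rw [real_inner_comm]; exact e3
  have e4 : ⟪deriv (gvec x₁ n₁) t, deriv x₁ t⟫ = - geodCurv x₁ n₁ t := hg1inner t
  have e5 : ⟪deriv (gvec x₁ n₁) t, n₁ t⟫ = geodTors x₁ n₁ t := rfl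
  have e6 : ⟪deriv (gvec x n) (s t), deriv x (s t)⟫ = - geodCurv x n (s t) := hginner (s t)
  have e7 : ⟪deriv (gvec x n) (s t), n (s t)⟫ = geodTors x n (s t) := rfl
  -- (A)
  have hA : deriv s t * Real.cos (θ t) = 1 - lam * geodCurv x₁ n₁ t := by
    have h := congrArg (fun v : E3 => (⟪v, deriv x₁ t⟫ : ℝ)) hE1
    simp only [hTeq t, inner_add_left, inner_sub_left, real_inner_smul_left, e1, e3, e4] at h
    linarith [h]
  -- (C)
  have hC : deriv s t * Real.sin (θ t) = -(lam * geodTors x₁ n₁ t) := by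
    have h := congrArg (fun v : E3 => (⟪v, n₁ t⟫ : ℝ)) hE1
    simp only [hTeq t, inner_add_left, inner_sub_left, real_inner_smul_left, e2, e3', e5] at h
    linarith [h]
  -- expansion of T₁ in the frame at s t
  have hT1expand : deriv x₁ t
      = Real.cos (θ t) • deriv x (s t) + Real.sin (θ t) • n (s t) := by
    rw [hTeq t, hneq t]
    have hpy := Real.cos_sq_add_sin_sq (θ t)
    have hmod : Real.cos (θ t) • (Real.cos (θ t) • deriv x₁ t - Real.sin (θ t) • n₁ t)
        + Real.sin (θ t) • (Real.sin (θ t) • deriv x₁ t + Real.cos (θ t) • n₁ t)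
        = (Real.cos (θ t) ^ 2 + Real.sin (θ t) ^ 2) • deriv x₁ t := by module
    rw [hmod, hpy, one_smul]
  -- (B)
  have hB : deriv s t * (-(Real.cos (θ t) * geodCurv x n (s t))
      + Real.sin (θ t) * geodTors x n (s t)) = - geodCurv x₁ n₁ t := by
    have hL : ⟪deriv (gvec x n) (s t), deriv x₁ t⟫
        = -(Real.cos (θ t) * geodCurv x n (s t)) + Real.sin (θ t) * geodTors x n (s t) := by
      rw [hT1expand]
      simp only [inner_add_right, real_inner_smul_right, e6, e7]; ring
    have h := congrArg (fun v : E3 => (⟪v, deriv x₁ t⟫ : ℝ)) hE2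
    simp only [real_inner_smul_left, hL, e4] at h
    exact h
  have hKey : geodCurv x n (s t) - geodCurv x₁ n₁ t
      - lam * (geodCurv x n (s t) * geodCurv x₁ n₁ t)
      = -(lam * (geodTors x n (s t) * geodTors x₁ n₁ t)) := by
    linear_combination (-(geodCurv x n (s t))) * hA - hB + (geodTors x n (s t)) * hC
  rcases hprin with hz | hz
  · rw [hz (s t)] at hKey; linear_combination hKey
  · rw [hz t] at hKey; linear_combination hKey
end
end

section
/- Let {x, x₁} be a Bertrand D-pair with constant λ ≠ 0, correspondence s and angle function θ. Then for every s₁ one has τ_{g₁}(s₁) = (k_g(s(s₁)) sin θ(s₁) + τ_g(s(s₁)) cos θ(s₁)) · s'(s₁). -/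
noncomputable section

lemma cross3_contDiff {a b : ℝ → E3} (ha : ContDiff ℝ (⊤ : ℕ∞) a)
    (hb : ContDiff ℝ (⊤ : ℕ∞) b) :
    ContDiff ℝ (⊤ : ℕ∞) (fun t => cross3 (a t) (b t)) := by
  rw [contDiff_euclidean]
  have ha' : ∀ i, ContDiff ℝ (⊤ : ℕ∞) (fun t => a t i) := contDiff_euclidean.mp ha
  have hb' : ∀ i, ContDiff ℝ (⊤ : ℕ∞) (fun t => b t i) := contDiff_euclidean.mp hb
  intro i
  fin_cases i
  · have h0 : (fun t => cross3 (a t) (b t) 0) = fun t => a t 1 * b t 2 - a t 2 * b t 1 := by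
      funext t; simp [cross3]
    exact h0 ▸ ((ha' 1).mul (hb' 2)).sub ((ha' 2).mul (hb' 1))
  · have h0 : (fun t => cross3 (a t) (b t) 1) = fun t => a t 2 * b t 0 - a t 0 * b t 2 := by
      funext t; simp [cross3]
    exact h0 ▸ ((ha' 2).mul (hb' 0)).sub ((ha' 0).mul (hb' 2))
  · have h0 : (fun t => cross3 (a t) (b t) 2) = fun t => a t 0 * b t 1 - a t 1 * b t 0 := by
      funext t; simp [cross3]
    exact h0 ▸ ((ha' 0).mul (hb' 1)).sub ((ha' 1).mul (hb' 0))

lemma inner_cross3_right (a b : E3) : (inner ℝ (cross3 a b) b : ℝ) = 0 := by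
  simp [PiLp.inner_apply, Fin.sum_univ_three, cross3]
  ring

lemma gvec_contDiff {x n : ℝ → E3} (h : IsDarbouxCurve x n) :
    ContDiff ℝ (⊤ : ℕ∞) (gvec x n) :=
  cross3_contDiff (h.2.1.of_le (by simp))
    (contDiff_infty_iff_deriv.mp (h.1.of_le (by simp))).2

theorem bertrand_D_stmt_13
    (x n x₁ n₁ : ℝ → E3) (lam : ℝ) (s θ : ℝ → ℝ)
    (hpair : IsBertrandDPair x n x₁ n₁ lam s θ) :
    ∀ t, geodTors x₁ n₁ t = (geodCurv x n (s t) * Real.sin (θ t) + geodTors x n (s t) * Real.cos (θ t)) * deriv s t := by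
  obtain ⟨hx, hx₁, -, hs, -, -, hgeq, -, hTeq, hneq⟩ := hpair
  intro t
  have hgsm : ContDiff ℝ (⊤ : ℕ∞) (gvec x n) := gvec_contDiff hx
  have hTsm : ContDiff ℝ (⊤ : ℕ∞) (deriv x) :=
    (contDiff_infty_iff_deriv.mp (hx.1.of_le (by simp))).2
  -- Step A : deriv g₁ t = s' t • deriv g (s t)
  have hfun : (gvec x n) ∘ s = gvec x₁ n₁ := funext hgeq
  have hA : deriv (gvec x₁ n₁) t = deriv s t • deriv (gvec x n) (s t) := by
    rw [← hfun]
    exact deriv.scomp t (hgsm.differentiable (by simp) _) ((hs.of_le (by simp)).differentiable (by simp : (1 : WithTop ℕ∞) ≠ 0) t)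
  -- Step B/C : ⟪g'(u), T(u)⟫ = - ⟪T'(u), g(u)⟫
  have hC : (inner ℝ (deriv (gvec x n) (s t)) (deriv x (s t)) : ℝ)
      = - (inner ℝ (deriv (deriv x) (s t)) (gvec x n (s t)) : ℝ) := by
    have hzero : (fun u => (inner ℝ (gvec x n u) (deriv x u) : ℝ)) = fun _ => 0 := by
      funext u; exact inner_cross3_right _ _
    have hder : deriv (fun u => (inner ℝ (gvec x n u) (deriv x u) : ℝ)) (s t) = 0 := by
      rw [hzero]; simp
    rw [deriv_inner_apply (𝕜 := ℝ) (hgsm.differentiable (by simp) _)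
      (hTsm.differentiable (by simp) _)] at hder
    linarith [real_inner_comm (gvec x n (s t)) (deriv (deriv x) (s t)), hder]
  -- Step D : n₁ t = cosθ • n (s t) - sinθ • T (s t)
  have hD : n₁ t = Real.cos (θ t) • n (s t) - Real.sin (θ t) • deriv x (s t) := by
    rw [hneq t, hTeq t]
    match_scalars <;> nlinarith [Real.sin_sq_add_cos_sq (θ t)]
  -- conclude
  simp only [geodTors, geodCurv]
  rw [hA, hD, inner_smul_left, inner_sub_right, inner_smul_right, inner_smul_right]
  simp only [conj_trivial]
  rw [hC]
  ring
end
end
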